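/- Let φ, φ^ex : Ω → ℝ and Ψ, Ψ_h : Γ₁ → Ω with φ ∘ Ψ = I_hφ on Γ₁ (a set), where I_hφ : Γ₁ → ℝ satisfies I_hφ = 0 on Γ₁. Assume (i) sup_{Ω^Γ} |φ^ex − φ| ≤ c₁ h^{k+1}, (ii) φ is Lipschitz on Ω^Γ with Lipschitz constant L, (iii) sup_{Γ₁} ‖Ψ − Ψ_h‖₂ ≤ c₂ h^{k+1}, and (iv) Ψ(Γ₁) ⊆ Ω^Γ and Ψ_h(Γ₁) ⊆ Ω^Γ. Then sup_{x ∈ Γ₁} |φ^ex(Ψ_h(x))| ≤ (c₁ + L c₂) h^{k+1}. -/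

import Mathlib

open scoped NNReal

theorem abs_le_of_abs_sub_le_of_lipschitzOnWith {α : Type*} [PseudoMetricSpace α] {s : Set α}
    {f g : α → ℝ} {K : ℝ≥0} {ε δ : ℝ} (hgf : ∀ y ∈ s, |g y - f y| ≤ ε)
    (hf : LipschitzOnWith K f s) {a b : α} (ha : a ∈ s) (hb : b ∈ s) (hfa : f a = 0)
    (hab : dist a b ≤ δ) : |g b| ≤ ε + K * δ := by
  have hlip : |f b - f a| ≤ K * δ := by
    rw [← Real.dist_eq]
    exact (hf.dist_le_mul b hb a ha).trans
      (mul_le_mul_of_nonneg_left (dist_comm a b ▸ hab) K.coe_nonneg)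
  calc |g b| = |(g b - f b) + (f b - f a)| := by rw [hfa]; ring_nf
    _ ≤ |g b - f b| + |f b - f a| := abs_add_le _ _
    _ ≤ ε + K * δ := add_le_add (hgf b hb) hlip

/-- The central error estimate. Assume `φ ∘ Ψ = I_hφ` on `Γ₁`, `I_hφ = 0`
on `Γ₁`, `sup_{Ω^Γ} |φ^ex − φ| ≤ c₁ h^{k+1}`, `φ` is `L`-Lipschitz on `Ω^Γ`,
`sup_{Γ₁} ‖Ψ − Ψ_h‖ ≤ c₂ h^{k+1}`, and `Ψ(Γ₁), Ψ_h(Γ₁) ⊆ Ω^Γ`. Then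
`sup_{x ∈ Γ₁} |φ^ex(Ψ_h(x))| ≤ (c₁ + L c₂) h^{k+1}`. -/
theorem stmt7 {n : ℕ} (Γ₁ ΩΓ : Set (EuclideanSpace ℝ (Fin n)))
    (φ φex Ihφ : EuclideanSpace ℝ (Fin n) → ℝ)
    (Ψ Ψh : EuclideanSpace ℝ (Fin n) → EuclideanSpace ℝ (Fin n))
    (c₁ c₂ h : ℝ) (k : ℕ) (L : NNReal)
    (hΨ : ∀ x ∈ Γ₁, φ (Ψ x) = Ihφ x)
    (hIh : ∀ x ∈ Γ₁, Ihφ x = 0)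
    (happrox : ∀ y ∈ ΩΓ, |φex y - φ y| ≤ c₁ * h ^ (k + 1))
    (hlip : LipschitzOnWith L φ ΩΓ)
    (hclose : ∀ x ∈ Γ₁, ‖Ψ x - Ψh x‖ ≤ c₂ * h ^ (k + 1))
    (hmap : ∀ x ∈ Γ₁, Ψ x ∈ ΩΓ) (hmaph : ∀ x ∈ Γ₁, Ψh x ∈ ΩΓ) :
    ∀ x ∈ Γ₁, |φex (Ψh x)| ≤ (c₁ + (L : ℝ) * c₂) * h ^ (k + 1) := by
  intro x hx
  have hzero : φ (Ψ x) = 0 := (hΨ x hx).trans (hIh x hx)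
  have hdist : dist (Ψ x) (Ψh x) ≤ c₂ * h ^ (k + 1) := (dist_eq_norm _ _).trans_le (hclose x hx)
  calc |φex (Ψh x)| ≤ c₁ * h ^ (k + 1) + L * (c₂ * h ^ (k + 1)) :=
        abs_le_of_abs_sub_le_of_lipschitzOnWith happrox hlip (hmap x hx) (hmaph x hx) hzero hdist
    _ = (c₁ + (L : ℝ) * c₂) * h ^ (k + 1) := by ring
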